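/- arXiv:2603.09153 — 2 statements merged into one kernel-verified Lean document; each statement's English description precedes it below -/
import Mathlib

section
/- Let G be a digraph, p ≥ 0, and ω ∈ Ω_p(G). For vertices a, b let ω_{a,b} denote the sum of all terms of ω whose elementary path starts at a and ends at b. Then each ω_{a,b} belongs to Ω_p(G) and ω = Σ_{a,b} ω_{a,b}; in particular, every ∂-invariant p-path is a sum of ∂-invariant clusters. -/
open scoped BigOperators
open Classical

/-- A digraph: an irreflexive relation on a vertex type. -/
structure Dgraph (V : Type*) where
  Adj : V → V → Prop
  loopless : ∀ v : V, ¬ Adj v v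

/-- An elementary `p`-path on the vertex type `V`: a sequence of `p+1` vertices. -/
abbrev EPath (V : Type*) (p : ℕ) := Fin (p + 1) → V

/-- A path is regular if consecutive vertices are distinct. -/
def IsRegularPath {V : Type*} {p : ℕ} (f : EPath V p) : Prop :=
  ∀ k : Fin p, f k.castSucc ≠ f k.succ

/-- A path is allowed if consecutive vertices are joined by an arrow. -/
def IsAllowedPath {V : Type*} (G : Dgraph V) {p : ℕ} (f : EPath V p) : Prop :=
  ∀ k : Fin p, G.Adj (f k.castSucc) (f k.succ)

/-- The projection of `Λ_p` onto its regular part; this realizes `R_p = Λ_p / I_p`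
as the subspace of `Λ_p` spanned by the regular elementary paths. -/
noncomputable def regProj (K : Type*) [Field K] (V : Type*) (p : ℕ) :
    (EPath V p →₀ K) →ₗ[K] (EPath V p →₀ K) :=
  Finsupp.linearCombination K
    (fun f : EPath V p => if IsRegularPath f then Finsupp.single f (1 : K) else 0)

/-- The (non-reduced) boundary operator on `Λ`. -/
noncomputable def bdryFull (K : Type*) [Field K] (V : Type*) (p : ℕ) :
    (EPath V (p + 1) →₀ K) →ₗ[K] (EPath V p →₀ K) :=
  Finsupp.linearCombination K
    (fun f : EPath V (p + 1) =>
      ∑ q : Fin (p + 2), ((-1 : K) ^ (q : ℕ)) • Finsupp.single (f ∘ q.succAbove) (1 : K))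

/-- The boundary operator `∂` on the regular part (i.e. on `R`). -/
noncomputable def bdry (K : Type*) [Field K] (V : Type*) (p : ℕ) :
    (EPath V (p + 1) →₀ K) →ₗ[K] (EPath V p →₀ K) :=
  (regProj K V p).comp (bdryFull K V p)

/-- The span of the regular elementary paths: the realization of `R_p` inside `Λ_p`. -/
noncomputable def regularMod (K : Type*) [Field K] (V : Type*) (p : ℕ) :
    Submodule K (EPath V p →₀ K) :=
  Submodule.span K {x | ∃ f : EPath V p, IsRegularPath f ∧ x = Finsupp.single f (1 : K)}

/-- `A_p(G)`: the span of the allowed elementary paths. -/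
noncomputable def allowedMod (K : Type*) [Field K] (V : Type*) (G : Dgraph V) (p : ℕ) :
    Submodule K (EPath V p →₀ K) :=
  Submodule.span K {x | ∃ f : EPath V p, IsAllowedPath G f ∧ x = Finsupp.single f (1 : K)}

/-- `Ω_p(G)`: the space of ∂-invariant `p`-paths. -/
noncomputable def Omega (K : Type*) [Field K] (V : Type*) (G : Dgraph V) :
    (p : ℕ) → Submodule K (EPath V p →₀ K)
  | 0 => allowedMod K V G 0
  | (p + 1) => allowedMod K V G (p + 1) ⊓ (allowedMod K V G p).comap (bdry K V p)

/-- An `(a,b)`-cluster: every elementary path occurring with nonzero coefficient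
starts at `a` and ends at `b`. -/
def IsCluster {K : Type*} [Field K] {V : Type*} {p : ℕ} (a b : V) (ω : EPath V p →₀ K) : Prop :=
  ∀ f ∈ ω.support, f 0 = a ∧ f (Fin.last p) = b

/-- A minimal ∂-invariant path: a nonzero element of `Ω_p` such that no nonzero
∂-invariant path is supported on a proper (nonempty) subset of its support. -/
def IsMinimal (K : Type*) [Field K] {V : Type*} (G : Dgraph V) (p : ℕ)
    (ω : EPath V p →₀ K) : Prop :=
  ω ∈ Omega K V G p ∧ ω ≠ 0 ∧
    ∀ ω' : EPath V p →₀ K, ω' ∈ Omega K V G p → ω' ≠ 0 → ¬ (ω'.support ⊂ ω.support)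

/-- A digraph map: every arrow goes to an arrow or collapses to a vertex. -/
structure DgraphMap {V W : Type*} (X : Dgraph V) (Y : Dgraph W) where
  toFun : V → W
  map_adj : ∀ ⦃u v : V⦄, X.Adj u v → Y.Adj (toFun u) (toFun v) ∨ toFun u = toFun v

/-- The induced map `f_* : R_n(X) → R_n(Y)` (in the regular-part realization):
push forward elementary paths and kill the irregular ones. -/
noncomputable def inducedMap (K : Type*) [Field K] {V W : Type*} (φ : V → W) (p : ℕ) :
    (EPath V p →₀ K) →ₗ[K] (EPath W p →₀ K) :=
  (regProj K W p).comp (Finsupp.lmapDomain K K (fun f : EPath V p => φ ∘ f))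

/-- Cyclic successor on `Fin m`. -/
def finRot {m : ℕ} (k : Fin m) : Fin m := ⟨((k : ℕ) + 1) % m, Nat.mod_lt _ k.pos⟩

/-- The vertices of the trapezohedron `T_m`. -/
inductive TVert (m : ℕ) : Type
  | a : TVert m
  | b : TVert m
  | vi : Fin m → TVert m
  | vj : Fin m → TVert m

/-- The adjacency relation of the trapezohedron `T_m`:
`a → i_k`, `i_k → j_k`, `i_{k+1} → j_k`, `j_k → b` (indices mod `m`). -/
def TrapAdj (m : ℕ) : TVert m → TVert m → Prop
  | TVert.a, TVert.vi _ => True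
  | TVert.vi k, TVert.vj l => k = l ∨ k = finRot l
  | TVert.vj _, TVert.b => True
  | _, _ => False

/-- The trapezohedron digraph `T_m`. -/
def Trap (m : ℕ) : Dgraph (TVert m) where
  Adj := TrapAdj m
  loopless := by intro v h; cases v <;> exact h

/-- The trapezohedral path `τ_m`. -/
noncomputable def tau (K : Type*) [Field K] (m : ℕ) : EPath (TVert m) 3 →₀ K :=
  ∑ k : Fin m,
    (Finsupp.single ![TVert.a, TVert.vi k, TVert.vj k, TVert.b] (1 : K)
      - Finsupp.single ![TVert.a, TVert.vi (finRot k), TVert.vj k, TVert.b] (1 : K))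

/-- The submodule of `(a,b)`-clusters. -/
def clusterMod (K : Type*) [Field K] (V : Type*) (p : ℕ) (a b : V) :
    Submodule K (EPath V p →₀ K) where
  carrier := {ω | ∀ f ∈ ω.support, f 0 = a ∧ f (Fin.last p) = b}
  add_mem' := by
    intro x y hx hy f hf
    rcases Finset.mem_union.mp (Finsupp.support_add hf) with h | h
    exacts [hx f h, hy f h]
  zero_mem' := by intro f hf; simp at hf
  smul_mem' := by
    intro c x hx f hf
    exact hx f (Finsupp.support_smul hf)

/-- `Ω₃^{(a,b)}(G)`: the ∂-invariant `(a,b)`-clusters. -/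
noncomputable def OmegaAB (K : Type*) [Field K] (V : Type*) (G : Dgraph V) (a b : V) :
    Submodule K (EPath V 3 →₀ K) :=
  Omega K V G 3 ⊓ clusterMod K V 3 a b

/-- Out-neighbourhood. -/
def Nplus {V : Type*} (G : Dgraph V) (v : V) : Set V := {w | G.Adj v w}

/-- In-neighbourhood. -/
def Nminus {V : Type*} (G : Dgraph V) (v : V) : Set V := {w | G.Adj w v}

/-- `E(X,Y)`: the edges of `G` starting in `X` and ending in `Y`. -/
def Ebetween {V : Type*} (G : Dgraph V) (X Y : Set V) : Set (V × V) :=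
  {p | p.1 ∈ X ∧ p.2 ∈ Y ∧ G.Adj p.1 p.2}

/-- `A = N⁺(a) \ {b}`. -/
def setA {V : Type*} (G : Dgraph V) (a b : V) : Set V := Nplus G a \ {b}

/-- `B = N⁻(b) \ {a}`. -/
def setB {V : Type*} (G : Dgraph V) (a b : V) : Set V := Nminus G b \ {a}

/-- The vertex set of `H = Ind(A \ B, B \ A)`. -/
def Hverts {V : Type*} (G : Dgraph V) (a b : V) : Set V :=
  (setA G a b \ setB G a b) ∪ (setB G a b \ setA G a b)

/-- `H = Ind(A \ B, B \ A)` regarded as an undirected (simple) graph on its vertex set. -/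
def Hgraph {V : Type*} (G : Dgraph V) (a b : V) : SimpleGraph (Hverts G a b) where
  Adj u v :=
    ((u : V) ∈ setA G a b \ setB G a b ∧ (v : V) ∈ setB G a b \ setA G a b ∧ G.Adj u v)
      ∨ ((v : V) ∈ setA G a b \ setB G a b ∧ (u : V) ∈ setB G a b \ setA G a b ∧ G.Adj v u)
  symm := ⟨by intro u v h; exact h.symm⟩
  loopless := ⟨by
    intro u h
    rcases h with ⟨_, _, h3⟩ | ⟨_, _, h3⟩ <;> exact G.loopless _ h3⟩

/-- The set of vertices of `G` belonging to the connected component `c` of `H`. -/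
def compVerts {V : Type*} (G : Dgraph V) (a b : V)
    (c : (Hgraph G a b).ConnectedComponent) : Set V :=
  {v | ∃ h : v ∈ Hverts G a b, (Hgraph G a b).connectedComponentMk ⟨v, h⟩ = c}

/-- The set `S_k` associated to a connected component of `H`. -/
def Sset {V : Type*} (G : Dgraph V) (a b : V)
    (c : (Hgraph G a b).ConnectedComponent) : Set (V × V) :=
  Ebetween G (compVerts G a b c ∩ (setA G a b \ setB G a b))
      ((Nplus G a ∪ {a}) ∩ Nminus G b)
    ∪ Ebetween G (Nplus G a ∩ (Nminus G b ∪ {b}))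
      (compVerts G a b c ∩ (setB G a b \ setA G a b))

/-!
An elementary path that is not allowed can only occur in the boundary of an allowed path
as a face obtained by deleting an interior vertex, since deleting the first or the last
vertex of an allowed path leaves an allowed path. Interior faces keep both endpoints, so the
non-allowed terms of `∂ω` at a path with endpoints `(a, b)` come from the `(a, b)`-part of
`ω` alone, and `∂ω ∈ A_{p-1}` splits into the same condition for every `(a, b)`-part.
-/

section

variable {K : Type*} [Field K] {V : Type*} {G : Dgraph V} {p : ℕ}

variable (G p) in
lemma allowedMod_eq_supported :
    allowedMod K V G p = Finsupp.supported K K {f | IsAllowedPath G f} := by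
  rw [Finsupp.supported_eq_span_single, allowedMod]
  congr 1
  ext x
  simp [eq_comm]

lemma mem_allowedMod_iff {x : EPath V p →₀ K} :
    x ∈ allowedMod K V G p ↔ ∀ f ∈ x.support, IsAllowedPath G f := by
  rw [allowedMod_eq_supported, Finsupp.mem_supported]
  rfl

lemma filter_mem_allowedMod {x : EPath V p →₀ K}
    (hx : x ∈ allowedMod K V G p) (P : EPath V p → Prop) [DecidablePred P] :
    x.filter P ∈ allowedMod K V G p :=
  mem_allowedMod_iff.mpr fun f hf =>
    mem_allowedMod_iff.mp hx f (Finset.mem_filter.mp hf).1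

lemma regProj_eq_filter (x : EPath V p →₀ K) :
    regProj K V p x = x.filter IsRegularPath := by
  induction x using Finsupp.induction_linear with
  | zero => rw [map_zero, Finsupp.filter_zero]
  | add x y hx hy => rw [map_add, Finsupp.filter_add, hx, hy]
  | single f c =>
    rw [regProj, Finsupp.linearCombination_single]
    by_cases h : IsRegularPath f
    · rw [if_pos h, Finsupp.filter_single_of_pos _ h, Finsupp.smul_single_one]
    · rw [if_neg h, Finsupp.filter_single_of_neg _ h, smul_zero]

lemma bdry_mem_allowedMod_iff {x : EPath V (p + 1) →₀ K} :
    bdry K V p x ∈ allowedMod K V G p ↔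
      ∀ g, IsRegularPath g → ¬ IsAllowedPath G g → bdryFull K V p x g = 0 := by
  simp only [mem_allowedMod_iff, bdry, LinearMap.comp_apply, regProj_eq_filter,
    Finsupp.support_filter, Finset.mem_filter, Finsupp.mem_support_iff, and_imp]
  exact forall_congr' fun g => by tauto

lemma IsAllowedPath.comp_succ {f : EPath V (p + 1)} (hf : IsAllowedPath G f) :
    IsAllowedPath G (f ∘ Fin.succ) :=
  fun k => hf k.succ

lemma IsAllowedPath.comp_castSucc {f : EPath V (p + 1)} (hf : IsAllowedPath G f) :
    IsAllowedPath G (f ∘ Fin.castSucc) :=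
  fun k => hf k.castSucc

lemma IsAllowedPath.face_endpoints_of_not_allowed {f : EPath V (p + 1)} (hf : IsAllowedPath G f)
    {q : Fin (p + 2)} (hq : ¬ IsAllowedPath G (f ∘ q.succAbove)) :
    (f ∘ q.succAbove) 0 = f 0 ∧ (f ∘ q.succAbove) (Fin.last p) = f (Fin.last (p + 1)) := by
  have hq0 : q ≠ 0 := by rintro rfl; exact hq hf.comp_succ
  have hql : q ≠ Fin.last (p + 1) := by rintro rfl; exact hq (by simpa using hf.comp_castSucc)
  simp only [Function.comp_apply, Fin.succAbove_ne_zero_zero hq0, Fin.succAbove_ne_last_last hql,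
    and_self]

lemma bdryFull_single_apply_eq_zero {f : EPath V (p + 1)} {g : EPath V p}
    (hf : IsAllowedPath G f) (hg : ¬ IsAllowedPath G g)
    (hends : ¬ (f 0 = g 0 ∧ f (Fin.last (p + 1)) = g (Fin.last p))) (c : K) :
    bdryFull K V p (Finsupp.single f c) g = 0 := by
  rw [bdryFull, Finsupp.linearCombination_single, Finsupp.smul_apply, Finsupp.finsetSum_apply]
  refine smul_eq_zero_of_right c (Finset.sum_eq_zero fun q _ => ?_)
  rw [Finsupp.smul_apply, Finsupp.single_apply, if_neg, smul_zero]
  rintro rfl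
  obtain ⟨h0, hlast⟩ := hf.face_endpoints_of_not_allowed hg
  exact hends ⟨h0.symm, hlast.symm⟩

lemma bdryFull_apply_eq_zero {x : EPath V (p + 1) →₀ K} {g : EPath V p}
    (hg : ¬ IsAllowedPath G g)
    (hx : ∀ f ∈ x.support,
      IsAllowedPath G f ∧ ¬ (f 0 = g 0 ∧ f (Fin.last (p + 1)) = g (Fin.last p))) :
    bdryFull K V p x g = 0 := by
  rw [← Finsupp.sum_single x, Finsupp.sum, map_sum, Finsupp.finsetSum_apply]
  exact Finset.sum_eq_zero fun f hf =>
    bdryFull_single_apply_eq_zero (hx f hf).1 hg (hx f hf).2 _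

lemma bdryFull_apply_eq_filter {x : EPath V (p + 1) →₀ K}
    (hx : x ∈ allowedMod K V G (p + 1)) {g : EPath V p} (hg : ¬ IsAllowedPath G g) :
    bdryFull K V p x g =
      bdryFull K V p (x.filter fun f => f 0 = g 0 ∧ f (Fin.last (p + 1)) = g (Fin.last p)) g := by
  set P : EPath V (p + 1) → Prop := fun f => f 0 = g 0 ∧ f (Fin.last (p + 1)) = g (Fin.last p)
  have hrest : bdryFull K V p (x.filter fun f => ¬ P f) g = 0 := by
    refine bdryFull_apply_eq_zero hg fun f hf => ?_
    exact ⟨mem_allowedMod_iff.mp hx f (Finset.mem_filter.mp hf).1, (Finset.mem_filter.mp hf).2⟩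
  conv_lhs => rw [← Finsupp.filter_add_filter_not x P]
  rw [map_add, Finsupp.add_apply, hrest, add_zero]

lemma bdry_filter_endpoints_mem_allowedMod {x : EPath V (p + 1) →₀ K}
    (hx : x ∈ allowedMod K V G (p + 1)) (hbx : bdry K V p x ∈ allowedMod K V G p) (a b : V) :
    bdry K V p (x.filter fun f => f 0 = a ∧ f (Fin.last (p + 1)) = b) ∈ allowedMod K V G p := by
  refine bdry_mem_allowedMod_iff.mpr fun g hreg hg => ?_
  by_cases hab : g 0 = a ∧ g (Fin.last p) = b
  · obtain ⟨rfl, rfl⟩ := hab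
    rw [← bdryFull_apply_eq_filter hx hg]
    exact bdry_mem_allowedMod_iff.mp hbx g hreg hg
  · refine bdryFull_apply_eq_zero hg fun f hf => ?_
    obtain ⟨hfx, rfl, rfl⟩ := Finset.mem_filter.mp hf
    exact ⟨mem_allowedMod_iff.mp hx f hfx, fun h => hab ⟨h.1.symm, h.2.symm⟩⟩

lemma filter_endpoints_mem_Omega {ω : EPath V p →₀ K} (hω : ω ∈ Omega K V G p) (a b : V) :
    ω.filter (fun f => f 0 = a ∧ f (Fin.last p) = b) ∈ Omega K V G p := by
  cases p with
  | zero => exact filter_mem_allowedMod hω _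
  | succ p =>
    obtain ⟨hA, hbdry⟩ := Submodule.mem_inf.mp hω
    exact Submodule.mem_inf.mpr
      ⟨filter_mem_allowedMod hA _, bdry_filter_endpoints_mem_allowedMod hA hbdry a b⟩

lemma isCluster_filter_endpoints (ω : EPath V p →₀ K) (a b : V) :
    IsCluster a b (ω.filter (fun f => f 0 = a ∧ f (Fin.last p) = b)) := fun _ hf =>
  (Finset.mem_filter.mp hf).2

lemma finsum_filter_endpoints (ω : EPath V p →₀ K) :
    ∑ᶠ ab : V × V, ω.filter (fun f => f 0 = ab.1 ∧ f (Fin.last p) = ab.2) = ω := by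
  set ends : EPath V p → V × V := fun f => (f 0, f (Fin.last p))
  have hsupp : (Function.support fun ab : V × V =>
      ω.filter (fun f => f 0 = ab.1 ∧ f (Fin.last p) = ab.2)) ⊆ ω.support.image ends := by
    intro ab hab
    obtain ⟨f, hf⟩ := Finsupp.support_nonempty_iff.mpr hab
    obtain ⟨hf, h0, hlast⟩ := Finset.mem_filter.mp hf
    exact Finset.mem_image.mpr ⟨f, hf, Prod.ext h0 hlast⟩
  rw [finsum_eq_sum_of_support_subset _ hsupp]
  ext g
  have hends : ∀ ab : V × V, (g 0 = ab.1 ∧ g (Fin.last p) = ab.2) ↔ ends g = ab :=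
    fun ab => (Prod.ext_iff (x := ends g) (y := ab)).symm
  simp only [Finsupp.finsetSum_apply, Finsupp.filter_apply, hends, Finset.sum_ite_eq]
  split_ifs with hg
  · rfl
  · exact (Finsupp.notMem_support_iff.mp fun h => hg (Finset.mem_image_of_mem ends h)).symm

end

theorem statement1 (K : Type*) [Field K] {V : Type*} (G : Dgraph V) (p : ℕ)
    (ω : EPath V p →₀ K) (hω : ω ∈ Omega K V G p) :
    (∀ a b : V, IsCluster a b (ω.filter (fun f => f 0 = a ∧ f (Fin.last p) = b)) ∧
        ω.filter (fun f => f 0 = a ∧ f (Fin.last p) = b) ∈ Omega K V G p) ∧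
    ω = ∑ᶠ ab : V × V, ω.filter (fun f => f 0 = ab.1 ∧ f (Fin.last p) = ab.2) :=
  ⟨fun a b => ⟨isCluster_filter_endpoints ω a b, filter_endpoints_mem_Omega hω a b⟩,
    (finsum_filter_endpoints ω).symm⟩
end

section
/- Let G be a digraph, m ≥ 0 an integer, and let a, i₀,…,i_{m+1}, j₀,…,j_m, b be vertices (not necessarily pairwise distinct) satisfying, for all k = 0,…,m: a → i_k, i_k → j_k, j_k → b, and i_{k+1} → j_k; and in addition a → i_{m+1}, (i₀ → b or i₀ = b), and (i_{m+1} → b or i_{m+1} = b). Then ω := Σ_{k=0}^{m} (e_{a i_k j_k b} − e_{a i_{k+1} j_k b}) belongs to Ω₃(G); moreover there exists a digraph map f : T_{m+2} → G with f_*(τ_{m+2}) = ω. -/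
open scoped BigOperators
open Classical

/-!
`ω` is the image of `τ_{m+2}` under the digraph map `T_{m+2} → G` that fixes `a`, `b`, the `i_k`
and the `j_k` with `k ≤ m`, and collapses the extra vertex `j_{m+1}` onto `b`: the two squares of
`τ_{m+2}` through `j_{m+1}` become irregular and vanish. For `∂`-invariance, the face `a j_k b`
cancels inside each summand of `ω` and the faces `a i_k b` telescope to
`e_{a i₀ b} - e_{a i_{m+1} b}`; each of these two paths is allowed or, when `i₀ = b` resp.
`i_{m+1} = b`, irregular. All other faces of `∂ω` are allowed.
-/

theorem Fin.sum_castSucc_sub_succ {M : Type*} [AddCommGroup M] {n : ℕ} (g : Fin (n + 1) → M) :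
    ∑ k : Fin n, (g k.castSucc - g k.succ) = g 0 - g (Fin.last n) := by
  have h := Fin.sum_univ_castSucc g
  rw [Fin.sum_univ_succ] at h
  rw [Finset.sum_sub_distrib, eq_sub_of_add_eq' h.symm]
  abel

theorem Dgraph.ne_of_adj {V : Type*} (G : Dgraph V) {x y : V} (h : G.Adj x y) : x ≠ y :=
  fun e => G.loopless y (e ▸ h)

theorem IsAllowedPath.isRegularPath {V : Type*} {G : Dgraph V} {p : ℕ} {f : EPath V p}
    (hf : IsAllowedPath G f) : IsRegularPath f :=
  fun k => G.ne_of_adj (hf k)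

theorem isAllowedPath_vec3 {V : Type*} {G : Dgraph V} {x y z : V}
    (hxy : G.Adj x y) (hyz : G.Adj y z) : IsAllowedPath G ![x, y, z] :=
  Fin.forall_fin_two.2 ⟨hxy, hyz⟩

theorem isAllowedPath_vec4 {V : Type*} {G : Dgraph V} {w x y z : V}
    (hwx : G.Adj w x) (hxy : G.Adj x y) (hyz : G.Adj y z) : IsAllowedPath G ![w, x, y, z] :=
  Fin.forall_fin_succ.2 ⟨hwx, isAllowedPath_vec3 hxy hyz⟩

section RegularPart

variable (K : Type*) [Field K] {V : Type*} {p : ℕ}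

theorem regProj_single (f : EPath V p) :
    regProj K V p (Finsupp.single f 1) = if IsRegularPath f then Finsupp.single f 1 else 0 := by
  simp [regProj]

theorem regProj_single_of_isRegularPath {f : EPath V p} (hf : IsRegularPath f) :
    regProj K V p (Finsupp.single f 1) = Finsupp.single f 1 := by
  rw [regProj_single, if_pos hf]

theorem regProj_single_of_not_isRegularPath {f : EPath V p} (hf : ¬ IsRegularPath f) :
    regProj K V p (Finsupp.single f 1) = 0 := by
  rw [regProj_single, if_neg hf]

theorem single_mem_allowedMod {G : Dgraph V} {f : EPath V p} (hf : IsAllowedPath G f) :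
    Finsupp.single f (1 : K) ∈ allowedMod K V G p :=
  Submodule.subset_span ⟨f, hf, rfl⟩

theorem regProj_single_mem_allowedMod {G : Dgraph V} {f : EPath V p}
    (hf : ∀ k : Fin p, G.Adj (f k.castSucc) (f k.succ) ∨ f k.castSucc = f k.succ) :
    regProj K V p (Finsupp.single f 1) ∈ allowedMod K V G p := by
  rw [regProj_single]
  split_ifs with hreg
  · exact single_mem_allowedMod K fun k => (hf k).resolve_right (hreg k)
  · exact zero_mem _

theorem bdryFull_single_vec4 (w₀ w₁ w₂ w₃ : V) :
    bdryFull K V 2 (Finsupp.single ![w₀, w₁, w₂, w₃] (1 : K))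
      = Finsupp.single ![w₁, w₂, w₃] 1 - Finsupp.single ![w₀, w₂, w₃] 1
        + Finsupp.single ![w₀, w₁, w₃] 1 - Finsupp.single ![w₀, w₁, w₂] 1 := by
  obtain ⟨h₀, h₁, h₂, h₃⟩ : ![w₀, w₁, w₂, w₃] ∘ (0 : Fin 4).succAbove = ![w₁, w₂, w₃] ∧
      ![w₀, w₁, w₂, w₃] ∘ (1 : Fin 4).succAbove = ![w₀, w₂, w₃] ∧
      ![w₀, w₁, w₂, w₃] ∘ (2 : Fin 4).succAbove = ![w₀, w₁, w₃] ∧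
      ![w₀, w₁, w₂, w₃] ∘ (3 : Fin 4).succAbove = ![w₀, w₁, w₂] :=
    -- `FinVec.etaExpand v` unfolds to `![v 0, v 1, v 2]`, whose entries compute here
    ⟨(FinVec.etaExpand_eq _).symm, (FinVec.etaExpand_eq _).symm,
      (FinVec.etaExpand_eq _).symm, (FinVec.etaExpand_eq _).symm⟩
  rw [bdryFull, Finsupp.linearCombination_single, one_smul, Fin.sum_univ_four, h₀, h₁, h₂, h₃]
  norm_num [sub_eq_add_neg]

theorem inducedMap_single_vec4 {W : Type*} (φ : V → W) (w₀ w₁ w₂ w₃ : V) :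
    inducedMap K φ 3 (Finsupp.single ![w₀, w₁, w₂, w₃] 1)
      = regProj K W 3 (Finsupp.single ![φ w₀, φ w₁, φ w₂, φ w₃] 1) := by
  rw [inducedMap, LinearMap.comp_apply, Finsupp.lmapDomain_apply, Finsupp.mapDomain_single,
    ← FinVec.map_eq]
  rfl

end RegularPart

section Zigzag

variable (K : Type*) [Field K] {V : Type*} (a b : V) {n : ℕ} (iv : Fin (n + 1) → V)
  (jv : Fin n → V)

noncomputable def zigzagPath : EPath V 3 →₀ K :=
  ∑ k : Fin n, (Finsupp.single ![a, iv k.castSucc, jv k, b] 1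
    - Finsupp.single ![a, iv k.succ, jv k, b] 1)

theorem bdryFull_zigzagPath :
    bdryFull K V 2 (zigzagPath K a b iv jv)
      = ∑ k : Fin n, (Finsupp.single ![iv k.castSucc, jv k, b] 1
          - Finsupp.single ![a, iv k.castSucc, jv k] 1
          - Finsupp.single ![iv k.succ, jv k, b] 1 + Finsupp.single ![a, iv k.succ, jv k] 1)
        + (Finsupp.single ![a, iv 0, b] 1 - Finsupp.single ![a, iv (Fin.last n), b] 1) := by
  rw [zigzagPath, map_sum, ← Fin.sum_castSucc_sub_succ (fun t => Finsupp.single ![a, iv t, b] 1),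
    ← Finset.sum_add_distrib]
  refine Finset.sum_congr rfl fun k _ => ?_
  rw [map_sub, bdryFull_single_vec4, bdryFull_single_vec4]
  abel

variable {K a b iv jv} {G : Dgraph V}

theorem zigzagPath_mem_Omega (hai : ∀ k, G.Adj a (iv k))
    (hij : ∀ k, G.Adj (iv k.castSucc) (jv k)) (hij' : ∀ k, G.Adj (iv k.succ) (jv k))
    (hjb : ∀ k, G.Adj (jv k) b) (hi₀ : G.Adj (iv 0) b ∨ iv 0 = b)
    (hiₙ : G.Adj (iv (Fin.last n)) b ∨ iv (Fin.last n) = b) :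
    zigzagPath K a b iv jv ∈ Omega K V G 3 := by
  have hA (x y z : V) (hxy : G.Adj x y) (hyz : G.Adj y z) :
      regProj K V 2 (Finsupp.single ![x, y, z] 1) ∈ allowedMod K V G 2 :=
    regProj_single_mem_allowedMod K (Fin.forall_fin_two.2 ⟨Or.inl hxy, Or.inl hyz⟩)
  have hE (x : V) (hx : G.Adj a x) (hxb : G.Adj x b ∨ x = b) :
      regProj K V 2 (Finsupp.single ![a, x, b] 1) ∈ allowedMod K V G 2 :=
    regProj_single_mem_allowedMod K (Fin.forall_fin_two.2 ⟨Or.inl hx, hxb⟩)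
  refine ⟨Submodule.sum_mem _ fun k _ => sub_mem ?_ ?_, ?_⟩
  · exact single_mem_allowedMod K (isAllowedPath_vec4 (hai _) (hij k) (hjb k))
  · exact single_mem_allowedMod K (isAllowedPath_vec4 (hai _) (hij' k) (hjb k))
  · change regProj K V 2 (bdryFull K V 2 _) ∈ allowedMod K V G 2
    rw [bdryFull_zigzagPath, map_add, map_sum, map_sub]
    refine add_mem (Submodule.sum_mem _ fun k _ => ?_)
      (sub_mem (hE _ (hai 0) hi₀) (hE _ (hai _) hiₙ))
    simp only [map_add, map_sub]
    exact add_mem (sub_mem (sub_mem (hA _ _ _ (hij k) (hjb k)) (hA _ _ _ (hai _) (hij k)))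
      (hA _ _ _ (hij' k) (hjb k))) (hA _ _ _ (hai _) (hij' k))

end Zigzag

section Trapezohedron

theorem finRot_castSucc {n : ℕ} (k : Fin n) : finRot k.castSucc = k.succ := by
  ext
  exact Nat.mod_eq_of_lt (by simp)

theorem finRot_last (n : ℕ) : finRot (Fin.last n) = 0 := by
  ext
  simp [finRot]

variable {V : Type*} (a b : V) {n : ℕ} (iv : Fin (n + 1) → V) (jv : Fin n → V)

def trapMap : TVert (n + 1) → V
  | TVert.a => a
  | TVert.b => b
  | TVert.vi k => iv k
  | TVert.vj k => Fin.lastCases b jv k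

variable {a b iv jv} {G : Dgraph V}

theorem trapMap_map_adj (hai : ∀ k, G.Adj a (iv k))
    (hij : ∀ k, G.Adj (iv k.castSucc) (jv k)) (hij' : ∀ k, G.Adj (iv k.succ) (jv k))
    (hjb : ∀ k, G.Adj (jv k) b) (hi₀ : G.Adj (iv 0) b ∨ iv 0 = b)
    (hiₙ : G.Adj (iv (Fin.last n)) b ∨ iv (Fin.last n) = b) ⦃u v : TVert (n + 1)⦄
    (huv : (Trap (n + 1)).Adj u v) :
    G.Adj (trapMap a b iv jv u) (trapMap a b iv jv v)
      ∨ trapMap a b iv jv u = trapMap a b iv jv v := by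
  match u, v, huv with
  | TVert.a, TVert.vi k, _ => exact Or.inl (hai k)
  | TVert.vj k, TVert.b, _ =>
    induction k using Fin.lastCases with
    | last => exact Or.inr (by simp [trapMap])
    | cast k => exact Or.inl (by simpa [trapMap] using hjb k)
  | TVert.vi k, TVert.vj l, hkl =>
    induction l using Fin.lastCases with
    | last =>
      rcases hkl with rfl | rfl
      · simpa [trapMap] using hiₙ
      · simpa [trapMap, finRot_last] using hi₀
    | cast l =>
      rcases hkl with rfl | rfl
      · exact Or.inl (by simpa [trapMap] using hij l)
      · exact Or.inl (by simpa [trapMap, finRot_castSucc] using hij' l)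

variable (K : Type*) [Field K]

theorem inducedMap_trapMap_tau (hai : ∀ k, G.Adj a (iv k))
    (hij : ∀ k, G.Adj (iv k.castSucc) (jv k)) (hij' : ∀ k, G.Adj (iv k.succ) (jv k))
    (hjb : ∀ k, G.Adj (jv k) b) :
    inducedMap K (trapMap a b iv jv) 3 (tau K (n + 1)) = zigzagPath K a b iv jv := by
  have hb (x : V) : ¬ IsRegularPath ![a, x, b, b] := fun h => h 2 rfl
  rw [tau, map_sum, Fin.sum_univ_castSucc]
  simp only [map_sub, inducedMap_single_vec4, trapMap, Fin.lastCases_last, Fin.lastCases_castSucc,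
    finRot_castSucc, regProj_single_of_not_isRegularPath K (hb _), sub_zero, add_zero]
  refine Finset.sum_congr rfl fun k _ => ?_
  rw [regProj_single_of_isRegularPath K (isAllowedPath_vec4 (hai _) (hij k) (hjb k)).isRegularPath,
    regProj_single_of_isRegularPath K (isAllowedPath_vec4 (hai _) (hij' k) (hjb k)).isRegularPath]

end Trapezohedron

theorem statement7 (K : Type*) [Field K] {V : Type*} (G : Dgraph V) (m : ℕ)
    (a b : V) (iv : Fin (m + 2) → V) (jv : Fin (m + 1) → V)
    (hai : ∀ k : Fin (m + 1), G.Adj a (iv k.castSucc))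
    (hij : ∀ k : Fin (m + 1), G.Adj (iv k.castSucc) (jv k))
    (hjb : ∀ k : Fin (m + 1), G.Adj (jv k) b)
    (hij' : ∀ k : Fin (m + 1), G.Adj (iv k.succ) (jv k))
    (hai' : G.Adj a (iv (Fin.last (m + 1))))
    (hi0 : G.Adj (iv 0) b ∨ iv 0 = b)
    (him : G.Adj (iv (Fin.last (m + 1))) b ∨ iv (Fin.last (m + 1)) = b) :
    (∑ k : Fin (m + 1), (Finsupp.single ![a, iv k.castSucc, jv k, b] (1 : K)
        - Finsupp.single ![a, iv k.succ, jv k, b] (1 : K))) ∈ Omega K V G 3 ∧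
    ∃ f : DgraphMap (Trap (m + 2)) G,
      inducedMap K f.toFun 3 (tau K (m + 2))
        = ∑ k : Fin (m + 1), (Finsupp.single ![a, iv k.castSucc, jv k, b] (1 : K)
            - Finsupp.single ![a, iv k.succ, jv k, b] (1 : K)) := by
  have hai_all : ∀ k, G.Adj a (iv k) := fun k => Fin.lastCases hai' hai k
  exact ⟨zigzagPath_mem_Omega hai_all hij hij' hjb hi0 him,
    ⟨trapMap a b iv jv, trapMap_map_adj hai_all hij hij' hjb hi0 him⟩,
    inducedMap_trapMap_tau K hai_all hij hij' hjb⟩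
end
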